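/- arXiv:1512.06776 — 2 statements merged into one kernel-verified Lean document; each statement's English description precedes it below -/
import Mathlib

section
/- Let S be a semigroup with subsemilattice E ⊆ E(S) such that every ~R_E-class contains a unique idempotent from E, denoted a⁺. Then ~R_E is a left congruence if and only if (ab)⁺ = (ab⁺)⁺ for all a, b ∈ S. -/
/-! `(ab)⁺` and `(ab⁺)⁺` are the classes of `ab` and `ab⁺` for the kernel of `⁺`, which is `~R_E`;
since `b ~R_E b⁺`, left compatibility gives the identity, and conversely the identity makes
`(ca)⁺ = (ca⁺)⁺` depend only on `a⁺`. -/

section KernelOfRetraction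

variable {S : Type*} [Mul S] {r : S → S → Prop} {f : S → S}

theorem leftCompatible_iff_of_kernel (hker : ∀ a b, r a b ↔ f a = f b)
    (hf : ∀ a, f (f a) = f a) :
    (∀ a b c, r a b → r (c * a) (c * b)) ↔ ∀ a b, f (a * b) = f (a * f b) := by
  constructor
  · intro hcompat a b
    exact (hker _ _).1 (hcompat b (f b) a ((hker _ _).2 (hf b).symm))
  · intro hplus a b c hab
    rw [hker, hplus c a, hplus c b, (hker a b).1 hab]

end KernelOfRetraction

section TildeR

variable {S : Type*} [Mul S]

/-- The paper's `~R_E`. -/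
def TildeR (E : Set S) (a b : S) : Prop :=
  ∀ e ∈ E, (e * a = a ↔ e * b = b)

variable {E : Set S} {plus : S → S}

theorem tildeR_iff_plus_eq (hplusE : ∀ a : S, plus a ∈ E)
    (hplusR : ∀ a : S, ∀ e ∈ E, (e * plus a = plus a ↔ e * a = a))
    (hplusU : ∀ a : S, ∀ f ∈ E, (∀ e ∈ E, (e * f = f ↔ e * a = a)) → f = plus a) (a b : S) :
    TildeR E a b ↔ plus a = plus b := by
  constructor
  · intro hab
    exact hplusU b (plus a) (hplusE a) fun e he => (hplusR a e he).trans (hab e he)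
  · intro hpl e he
    rw [← hplusR a e he, ← hplusR b e he, hpl]

end TildeR

theorem left_congruence_iff_plus_identity_general
    (S : Type*) [Semigroup S] (E : Set S)
    (plus : S → S)
    (hplusE : ∀ a : S, plus a ∈ E)
    (hplusR : ∀ a : S, ∀ e ∈ E, (e * plus a = plus a ↔ e * a = a))
    (hplusU : ∀ a : S, ∀ f ∈ E, (∀ e ∈ E, (e * f = f ↔ e * a = a)) → f = plus a) :
    (∀ a b c : S, (∀ e ∈ E, (e * a = a ↔ e * b = b)) →
        (∀ e ∈ E, (e * (c * a) = c * a ↔ e * (c * b) = c * b))) ↔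
      (∀ a b : S, plus (a * b) = plus (a * plus b)) :=
  leftCompatible_iff_of_kernel (r := TildeR E) (tildeR_iff_plus_eq hplusE hplusR hplusU)
    fun a => (tildeR_iff_plus_eq hplusE hplusR hplusU _ _).1 (hplusR a)

/-- Let `S` be a semigroup with a subsemilattice `E ⊆ E(S)` such that
every `~R_E`-class contains a unique idempotent from `E`, denoted `a⁺` (the function
`plus`). Then `~R_E` is a left congruence iff `(ab)⁺ = (ab⁺)⁺` for all `a, b ∈ S`. -/
theorem left_congruence_iff_plus_identity
    (S : Type*) [Semigroup S] (E : Set S)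
    (hidem : ∀ e ∈ E, e * e = e)
    (hclosed : ∀ e ∈ E, ∀ f ∈ E, e * f ∈ E)
    (hcomm : ∀ e ∈ E, ∀ f ∈ E, e * f = f * e)
    (plus : S → S)
    (hplusE : ∀ a : S, plus a ∈ E)
    (hplusR : ∀ a : S, ∀ e ∈ E, (e * plus a = plus a ↔ e * a = a))
    (hplusU : ∀ a : S, ∀ f ∈ E, (∀ e ∈ E, (e * f = f ↔ e * a = a)) → f = plus a) :
    (∀ a b c : S, (∀ e ∈ E, (e * a = a ↔ e * b = b)) →
        (∀ e ∈ E, (e * (c * a) = c * a ↔ e * (c * b) = c * b))) ↔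
      (∀ a b : S, plus (a * b) = plus (a * plus b)) :=
  left_congruence_iff_plus_identity_general S E plus hplusE hplusR hplusU
end

section
/- If S is an E-Ehresmann semigroup with E finite, then the semigroup algebra KS over a commutative unital ring K is a unital algebra; an identity element is ψ(Σ_{e∈E} C(e)), i.e., the image in KS of the sum of identity morphisms of the associated category under the Möbius inversion map. -/
/-- An E-Ehresmann semigroup as a (2,1,1)-algebra. -/
class EhresmannSemigroup (S : Type*) extends Semigroup S where
  plus : S → S
  estar : S → S
  plus_mul_self : ∀ x : S, plus x * x = x
  plus_prod_idem : ∀ x y : S, plus (plus x * plus y) = plus x * plus y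
  plus_comm : ∀ x y : S, plus x * plus y = plus y * plus x
  plus_absorb : ∀ x y : S, plus x * plus (x * y) = plus (x * y)
  plus_mul_plus : ∀ x y : S, plus (x * y) = plus (x * plus y)
  mul_estar_self : ∀ x : S, x * estar x = x
  estar_prod_idem : ∀ x y : S, estar (estar x * estar y) = estar x * estar y
  estar_comm : ∀ x y : S, estar x * estar y = estar y * estar x
  estar_absorb : ∀ x y : S, estar (x * y) * estar y = estar (x * y)
  estar_mul_estar : ∀ x y : S, estar (x * y) = estar (estar x * y)
  estar_plus : ∀ x : S, estar (plus x) = plus x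
  plus_estar : ∀ x : S, plus (estar x) = estar x

open EhresmannSemigroup

/-!
Everything below a projection is a projection, and on projections `a ≤ b ↔ a = a⁺ b` is the
order of the semilattice `E`, with meet the product. The hypotheses on `μ` say that it is a left
inverse of `ζ` in the incidence algebra of `(S, ≤)`, so `μ` is the Möbius function and satisfies
the dual identity `∑_{c ≤ b ≤ e} μ(b, e) = δ(c, e)` as well. For a projection `f` and `c ≤ f`
the coefficients of `u * f` therefore sum over `[c, f]` to `∑_{e ∈ E} ∑_{c ≤ b ≤ e} μ(b, e) = 1`,
and Möbius inversion on `[·, f]` gives `u * f = f`. As `u` is supported on `E` it commutes with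
projections, and `s = s⁺ s = s s*` extends `u * f = f = f * u` to all of `KS`.
-/

open Finset IncidenceAlgebra

section Moebius

variable {α K : Type*} [PartialOrder α] [LocallyFiniteOrder α] [DecidableEq α] [Ring K]

theorem IncidenceAlgebra.eq_mu_of_sum_Icc_eq_zero {μ : α → α → K}
    (h_supp : ∀ a b, ¬ a ≤ b → μ a b = 0) (h_refl : ∀ a, μ a a = 1)
    (h_sum : ∀ a b, a ≤ b → a ≠ b → ∑ x ∈ Icc a b, μ a x = 0) (a b : α) :
    μ a b = mu K a b := by
  classical
  let M : IncidenceAlgebra K α := ⟨μ, h_supp⟩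
  have hM : M * zeta K = 1 := by
    ext a b hab
    rw [mul_apply, one_apply,
      sum_congr rfl fun x hx => by rw [zeta_of_le (mem_Icc.1 hx).2, mul_one]]
    split_ifs with h
    · simp [M, h, h_refl]
    · exact h_sum a b hab h
  exact congrArg (fun f : IncidenceAlgebra K α => f a b) (left_inv_eq_right_inv hM zeta_mul_mu)

theorem IncidenceAlgebra.sum_Icc_mu_mul_sum_Icc (F : α → K) {a b : α} (hab : a ≤ b) :
    ∑ c ∈ Icc a b, mu K a c * ∑ x ∈ Icc c b, F x = F a := by
  calc ∑ c ∈ Icc a b, mu K a c * ∑ x ∈ Icc c b, F x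
      = ∑ c ∈ Icc a b, ∑ x ∈ Icc c b, mu K a c * F x := by simp_rw [mul_sum]
    _ = ∑ x ∈ Icc a b, ∑ c ∈ Icc a x, mu K a c * F x := by
      refine sum_comm' fun c x => ?_
      simp only [mem_Icc]
      exact ⟨fun ⟨⟨hac, _⟩, hcx, hxb⟩ => ⟨⟨hac, hcx⟩, hac.trans hcx, hxb⟩,
        fun ⟨⟨hac, hcx⟩, _, hxb⟩ => ⟨⟨hac, hcx.trans hxb⟩, hcx, hxb⟩⟩
    _ = ∑ x ∈ Icc a b, (if a = x then 1 else 0) * F x := by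
      simp_rw [← sum_mul, sum_Icc_mu_right]
    _ = F a := by simp [hab]

end Moebius

namespace EhresmannSemigroup

variable {S : Type*} [EhresmannSemigroup S]

theorem plus_plus (x : S) : plus (plus x) = plus x := by
  rw [← estar_plus x, plus_estar]

theorem mem_range_plus_iff {e : S} : e ∈ Set.range plus ↔ plus e = e :=
  ⟨fun ⟨x, hx⟩ => hx ▸ plus_plus x, fun h => ⟨e, h⟩⟩

theorem plus_eq_plus_mul_plus {a b : S} (h : a = plus a * b) : plus a = plus a * plus b := by
  conv_lhs => rw [h]
  rw [plus_mul_plus, plus_prod_idem]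

abbrev rightOrder : PartialOrder S where
  le a b := a = plus a * b
  le_refl a := (plus_mul_self a).symm
  le_trans a b c hab hbc := calc
    a = plus a * b := hab
    _ = plus a * plus b * c := by rw [mul_assoc, ← hbc]
    _ = plus a * c := by rw [← plus_eq_plus_mul_plus hab]
  le_antisymm a b hab hba := by
    have : plus a = plus b := by
      rw [plus_eq_plus_mul_plus hab, plus_comm, ← plus_eq_plus_mul_plus hba]
    rw [hab, this, plus_mul_self]

attribute [local instance] rightOrder

theorem le_def {a b : S} : a ≤ b ↔ a = plus a * b := Iff.rfl

section Projection

variable {a b c e : S}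

theorem mul_self_of_plus_eq (ha : plus a = a) : a * a = a := by
  simpa [ha] using plus_mul_self a

theorem plus_mul_of_plus_eq (ha : plus a = a) (hb : plus b = b) : plus (a * b) = a * b := by
  simpa [ha, hb] using plus_prod_idem a b

theorem mul_comm_of_plus_eq (ha : plus a = a) (hb : plus b = b) : a * b = b * a := by
  simpa [ha, hb] using plus_comm a b

theorem le_iff_eq_mul (ha : plus a = a) : a ≤ b ↔ a = a * b := by
  rw [le_def, ha]

theorem plus_eq_of_le (he : plus e = e) (h : a ≤ e) : plus a = a := by
  have := plus_eq_plus_mul_plus h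
  rw [he] at this
  exact this.trans h.symm

theorem mul_le_right_of_plus_eq (hb : plus b = b) (he : plus e = e) : b * e ≤ e := by
  rw [le_iff_eq_mul (plus_mul_of_plus_eq hb he), mul_assoc, mul_self_of_plus_eq he]

theorem le_mul_iff_of_plus_eq (ha : plus a = a) (hb : plus b = b) (he : plus e = e) :
    a ≤ b * e ↔ a ≤ b ∧ a ≤ e := by
  simp only [le_iff_eq_mul ha]
  constructor
  · intro h
    constructor
    · rw [h, mul_assoc, mul_assoc, mul_comm_of_plus_eq he hb, ← mul_assoc b,
        mul_self_of_plus_eq hb]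
    · rw [h, mul_assoc, mul_assoc, mul_self_of_plus_eq he]
  · rintro ⟨hab, hae⟩
    rw [← mul_assoc, ← hab, ← hae]

end Projection

section MoebiusUnit

open MonoidAlgebra

variable (K : Type*) [Ring K] [DecidableEq S] [LocallyFiniteOrder S]

noncomputable def moebiusUnit (E : Finset S) : MonoidAlgebra K S :=
  ∑ e ∈ E, ∑ b ∈ E, single b (mu K b e)

variable {K} {E : Finset S} {c f : S}

theorem coeff_moebiusUnit_mul_single (f g : S) :
    (moebiusUnit K E * single f 1).coeff g =
      ∑ e ∈ E, ∑ b ∈ E, if b * f = g then mu K b e else 0 := by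
  simp [moebiusUnit, sum_mul, single_mul_single, coeff_sum, Finsupp.single_apply]

theorem coeff_moebiusUnit_mul_single_of_not_le (hE : ∀ e, e ∈ E ↔ plus e = e)
    (hf : plus f = f) {g : S} (hgf : ¬ g ≤ f) : (moebiusUnit K E * single f 1).coeff g = 0 := by
  rw [coeff_moebiusUnit_mul_single]
  refine sum_eq_zero fun e _ => sum_eq_zero fun b hb => if_neg ?_
  rintro rfl
  exact hgf (mul_le_right_of_plus_eq ((hE b).1 hb) hf)

theorem sum_Icc_coeff_moebiusUnit_mul_single (hE : ∀ e, e ∈ E ↔ plus e = e)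
    (hf : plus f = f) (hcf : c ≤ f) :
    ∑ x ∈ Icc c f, (moebiusUnit K E * single f 1).coeff x = 1 := by
  classical
  have hc : plus c = c := plus_eq_of_le hf hcf
  calc ∑ x ∈ Icc c f, (moebiusUnit K E * single f 1).coeff x
      = ∑ e ∈ E, ∑ b ∈ E, ∑ x ∈ Icc c f, if b * f = x then mu K b e else 0 := by
        simp only [coeff_moebiusUnit_mul_single]
        rw [sum_comm]
        exact sum_congr rfl fun e _ => sum_comm
    _ = ∑ e ∈ E, ∑ b ∈ E, if c ≤ b then mu K b e else 0 := by
        refine sum_congr rfl fun e _ => sum_congr rfl fun b hb => ?_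
        have hb' := (hE b).1 hb
        simp only [sum_ite_eq, mem_Icc, le_mul_iff_of_plus_eq hc hb' hf,
          mul_le_right_of_plus_eq hb' hf, hcf, and_true]
    _ = ∑ e ∈ E, ∑ b ∈ Icc c e, mu K b e := by
        refine sum_congr rfl fun e he => ?_
        rw [← sum_filter]
        refine (sum_subset (fun b hb => ?_) fun b hb hbn => ?_).symm
        · have hb := mem_Icc.1 hb
          exact mem_filter.2 ⟨(hE b).2 (plus_eq_of_le ((hE e).1 he) hb.2), hb.1⟩
        · exact apply_eq_zero_of_not_le
            (fun hbe => hbn (mem_Icc.2 ⟨(mem_filter.1 hb).2, hbe⟩)) _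
    _ = ∑ e ∈ E, if c = e then 1 else 0 := sum_congr rfl fun e _ => sum_Icc_mu_left c e
    _ = 1 := by rw [sum_ite_eq, if_pos ((hE c).2 hc)]

theorem moebiusUnit_mul_single (hE : ∀ e, e ∈ E ↔ plus e = e) (hf : plus f = f) :
    moebiusUnit K E * single f 1 = single f 1 := by
  ext g
  rw [coeff_single, Finsupp.single_apply]
  by_cases hgf : g ≤ f
  · refine (sum_Icc_mu_mul_sum_Icc
      (fun x => (moebiusUnit K E * single f 1).coeff x) hgf).symm.trans ?_
    rw [sum_congr rfl fun c hc => by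
      rw [sum_Icc_coeff_moebiusUnit_mul_single hE hf (mem_Icc.1 hc).2, mul_one], sum_Icc_mu_right]
    exact if_congr eq_comm rfl rfl
  · rw [coeff_moebiusUnit_mul_single_of_not_le hE hf hgf, if_neg (by rintro rfl; exact hgf le_rfl)]

theorem commute_moebiusUnit_single (hE : ∀ e, e ∈ E ↔ plus e = e) (hf : plus f = f) :
    Commute (moebiusUnit K E) (single f 1) :=
  Commute.sum_left _ _ _ fun _ _ => Commute.sum_left _ _ _ fun b hb =>
    single_commute_single (mul_comm_of_plus_eq ((hE b).1 hb) hf) (Commute.one_right _)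

theorem moebiusUnit_mul (hE : ∀ e, e ∈ E ↔ plus e = e) (x : MonoidAlgebra K S) :
    moebiusUnit K E * x = x := by
  induction x using MonoidAlgebra.induction_linear with
  | zero => exact mul_zero _
  | add x y hx hy => rw [mul_add, hx, hy]
  | single s r =>
    have hs : single s r = single (plus s) (1 : K) * single s r := by
      rw [single_mul_single, plus_mul_self, one_mul]
    rw [hs, ← mul_assoc, moebiusUnit_mul_single hE (plus_plus s)]

theorem mul_moebiusUnit (hE : ∀ e, e ∈ E ↔ plus e = e) (x : MonoidAlgebra K S) :
    x * moebiusUnit K E = x := by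
  induction x using MonoidAlgebra.induction_linear with
  | zero => exact zero_mul _
  | add x y hx hy => rw [add_mul, hx, hy]
  | single s r =>
    have hs : single s r = single s r * single (estar s) (1 : K) := by
      rw [single_mul_single, mul_estar_self, mul_one]
    rw [hs, mul_assoc, ← (commute_moebiusUnit_single hE (plus_estar s)).eq,
      moebiusUnit_mul_single hE (plus_estar s)]

end MoebiusUnit

end EhresmannSemigroup

/-- If `S` is an E-Ehresmann semigroup with `E` finite, then the
semigroup algebra `KS` over a commutative unital ring `K` is a unital algebra;
an identity element is `ψ(Σ_{e∈E} C(e)) = Σ_{e∈E} Σ_{b ≤_r e} μ(b,e)·b`, the image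
in `KS` of the sum of the identity morphisms under the Möbius inversion map. -/
theorem ehresmann_algebra_unital (S : Type*) [EhresmannSemigroup S] [DecidableEq S]
    (K : Type*) [CommRing K]
    (hE : (Set.range (plus : S → S)).Finite)
    (hfin : ∀ a : S, {b : S | b = plus b * a}.Finite)
    -- the Möbius function of the poset `≤_r`:
    (μ : S → S → K)
    (hμ_refl : ∀ a : S, μ a a = 1)
    (hμ_supp : ∀ a b : S, ¬ a = plus a * b → μ a b = 0)
    (hμ_sum : ∀ a b : S, a = plus a * b → a ≠ b →
      (((hfin b).toFinset.filter (fun c => a = plus a * c)).sum fun c => μ a c) = 0)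
    (u : MonoidAlgebra K S)
    (hu : u = hE.toFinset.sum fun e =>
      ((hfin e).toFinset).sum fun b => MonoidAlgebra.single b (μ b e)) :
    ∀ f : MonoidAlgebra K S, u * f = f ∧ f * u = f := by
  let _ : PartialOrder S := rightOrder
  let _ : LocallyFiniteOrder S := .ofFiniteIcc fun a b => (hfin b).subset fun _ hx => hx.2
  have hIcc : ∀ a b : S, (hfin b).toFinset.filter (fun c => a = plus a * c) = Icc a b := by
    intro a b
    ext c
    rw [mem_filter, Set.Finite.mem_toFinset, mem_Icc, and_comm]
    rfl
  have hμ : μ = ⇑(mu K) := funext₂ <| eq_mu_of_sum_Icc_eq_zero hμ_supp hμ_refl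
    fun a b hab hne => hIcc a b ▸ hμ_sum a b hab hne
  subst hμ
  have hE' : ∀ e, e ∈ hE.toFinset ↔ plus e = e :=
    fun _ => hE.mem_toFinset.trans mem_range_plus_iff
  have hu' : u = moebiusUnit K hE.toFinset := by
    rw [hu, moebiusUnit]
    refine sum_congr rfl fun e he => sum_subset (fun b hb => ?_) fun b _ hb => ?_
    · exact (hE' b).2 (plus_eq_of_le ((hE' e).1 he) ((hfin e).mem_toFinset.1 hb))
    · rw [apply_eq_zero_of_not_le (fun h => hb ((hfin e).mem_toFinset.2 h)),
        MonoidAlgebra.single_zero]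
  subst hu'
  exact fun f => ⟨moebiusUnit_mul hE' f, mul_moebiusUnit hE' f⟩
end
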